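/- Let x_{k+1} = A x_k + B u_k, y_k = C x_k + D u_k be a controllable LTI system of state dimension n, and let (u^d, y^d) be a trajectory of length T whose input is persistently exciting of order L + n. Then for any L-long input-output trajectory (ū, ȳ) of the system there exists g with [H_L(u^d); H_L(y^d)] g = [ū; ȳ]. -/

import Mathlib

open Matrix

/-- The block Hankel matrix of depth `L` built from the data `z_0, …, z_{T-1}`,
with `T - L + 1` columns. -/
def hankel {d : ℕ} (z : ℕ → Fin d → ℝ) (L T : ℕ) :
    Matrix (Fin L × Fin d) (Fin (T - L + 1)) ℝ :=
  fun p j => z ((j : ℕ) + (p.1 : ℕ)) p.2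

/-- The Kalman controllability matrix `[B, AB, …, A^{n-1}B]`. -/
def ctrbMatrix {n m : ℕ} (A : Matrix (Fin n) (Fin n) ℝ)
    (B : Matrix (Fin n) (Fin m) ℝ) : Matrix (Fin n) (Fin n × Fin m) ℝ :=
  fun i p => (A ^ (p.1 : ℕ) * B) i p.2

/-- `(u, y)` restricted to `k < K` is an input–output trajectory of the system
`x⁺ = A x + B u`, `y = C x + D u`. -/
def IsTrajectory {n m p : ℕ} (A : Matrix (Fin n) (Fin n) ℝ)
    (B : Matrix (Fin n) (Fin m) ℝ) (C : Matrix (Fin p) (Fin n) ℝ)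
    (D : Matrix (Fin p) (Fin m) ℝ) (u : ℕ → Fin m → ℝ) (y : ℕ → Fin p → ℝ)
    (K : ℕ) : Prop :=
  ∃ x : ℕ → Fin n → ℝ,
    (∀ k, k + 1 < K → x (k + 1) = A.mulVec (x k) + B.mulVec (u k)) ∧
    (∀ k, k < K → y k = C.mulVec (x k) + D.mulVec (u k))

/-! With `X` the matrix of data states, the stacked matrix `[H_L(u); X]` has full row rank. Take a
left-kernel vector `(ζ, η)`: expanding `x (j + i)` from `x j` turns the relation at column `j + i`
into one with state part `ζ Aⁱ`, and combining `i = 0, …, n` with the coefficients of the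
characteristic polynomial removes the state part (Cayley–Hamilton). Persistency of excitation then
forces all input weights of the combination to vanish; since `χ_A` is monic this system is
triangular, giving `η = 0` and `ζ Aᵏ B = 0` for `k < n`, so `ζ = 0` by controllability.

Hence some `g` maps the data to the input `ubar` and the initial state `xbar 0`. The shifted data
trajectories combined with weights `g` form a trajectory with that input and initial state, so
its output is `ybar`. -/

open Finset

namespace Matrix

variable {ι κ K : Type*} [Fintype ι] [Fintype κ] [Field K]

theorem vecMul_injective_of_rank_eq_card (M : Matrix ι κ K) (h : M.rank = Fintype.card ι) :
    Function.Injective M.vecMul := by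
  rw [vecMul_injective_iff, linearIndependent_iff_card_eq_finrank_span, ← h,
    rank_eq_finrank_span_row, Set.finrank]

theorem mulVec_surjective_of_vecMul_eq_zero (M : Matrix ι κ K)
    (h : ∀ v, v ᵥ* M = 0 → v = 0) : Function.Surjective M.mulVec := by
  have hrows : LinearIndependent K M.row :=
    Fintype.linearIndependent_iff.mpr fun v hv => congrFun (h v (by rwa [vecMul_eq_sum]))
  have hrange : LinearMap.range M.mulVecLin = ⊤ :=
    Submodule.eq_top_of_finrank_eq <| by
      rw [← rank, hrows.rank_matrix, Module.finrank_fintype_fun_eq_card]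
  exact LinearMap.range_eq_top.mp hrange

theorem sum_charpoly_coeff_smul_pow {R : Type*} [CommRing R] [Nontrivial R] [DecidableEq ι]
    (A : Matrix ι ι R) :
    ∑ i ∈ range (Fintype.card ι + 1), A.charpoly.coeff i • A ^ i = 0 := by
  simpa [Polynomial.aeval_eq_sum_range] using A.aeval_self_charpoly

end Matrix

section ShiftWeight

/-- The input weights of the functional `ζ ⬝ᵥ x (j + i) + ∑ l, e l ⬝ᵥ u (j + i + l)` once
`x (j + i)` is expanded from `x j`, where `p k = ζ ᵥ* (A ^ k * B)`. -/
def shiftWeight {M : Type*} (p e : ℕ → M) (i s : ℕ) : M :=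
  if s < i then p (i - 1 - s) else e (s - i)

variable {R M : Type*} [Semiring R] [AddCommMonoid M] [Module R M]
variable {c : ℕ → R} {n : ℕ}

theorem eq_zero_of_sum_smul_shiftWeight_add_eq_zero {L : ℕ} {p e : ℕ → M} (hc : c n = 1)
    (he : ∀ l, L ≤ l → e l = 0)
    (h : ∀ r < L, ∑ i ∈ range (n + 1), c i • shiftWeight p e i (n + r) = 0) : e = 0 := by
  suffices ∀ d r, L ≤ r + d → e r = 0 from funext fun r => this L r (by omega)
  intro d
  induction d with
  | zero => exact fun r hr => he r hr
  | succ d ih =>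
    intro r hr
    by_cases hrL : L ≤ r
    · exact he r hrL
    have hr := h r (by omega)
    rw [sum_range_succ, hc, one_smul, sum_eq_zero, zero_add] at hr
    · simpa [shiftWeight] using hr
    · intro i hi
      rw [mem_range] at hi
      rw [shiftWeight, if_neg (by omega), ih _ (by omega), smul_zero]

theorem eq_zero_of_sum_smul_shiftWeight_zero_eq_zero {p : ℕ → M} (hc : c n = 1)
    (h : ∀ s < n, ∑ i ∈ range (n + 1), c i • shiftWeight p 0 i s = 0) : ∀ k < n, p k = 0 := by
  intro k
  induction k using Nat.strong_induction_on with
  | _ k ih =>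
    intro hk
    have hs := h (n - 1 - k) (by omega)
    rw [sum_range_succ, hc, one_smul, sum_eq_zero, zero_add] at hs
    · rwa [shiftWeight, if_pos (by omega), show n - 1 - (n - 1 - k) = k by omega] at hs
    · intro i hi
      rw [mem_range] at hi
      unfold shiftWeight
      split_ifs with his
      · rw [ih _ (by omega) (by omega), smul_zero]
      · rw [Pi.zero_apply, smul_zero]

theorem eq_zero_of_sum_smul_shiftWeight_eq_zero {L : ℕ} {p e : ℕ → M} (hc : c n = 1)
    (he : ∀ l, L ≤ l → e l = 0)
    (h : ∀ s < n + L, ∑ i ∈ range (n + 1), c i • shiftWeight p e i s = 0) :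
    e = 0 ∧ ∀ k < n, p k = 0 := by
  obtain rfl : e = 0 :=
    eq_zero_of_sum_smul_shiftWeight_add_eq_zero hc he fun r hr => h (n + r) (by omega)
  exact ⟨rfl, eq_zero_of_sum_smul_shiftWeight_zero_eq_zero hc fun s hs => h s (by omega)⟩

end ShiftWeight

theorem vecMul_hankel_apply {d : ℕ} (w : ℕ → Fin d → ℝ) (z : ℕ → Fin d → ℝ) (K T : ℕ)
    (j : Fin (T - K + 1)) :
    ((fun q : Fin K × Fin d => w q.1 q.2) ᵥ* hankel z K T) j =
      ∑ s ∈ range K, w s ⬝ᵥ z (j + s) := by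
  simp only [vecMul, dotProduct, hankel, Fintype.sum_prod_type]
  exact Fin.sum_univ_eq_sum_range (fun s => ∑ q, w s q * z (j + s) q) K

theorem hankel_mulVec_apply {d : ℕ} (z : ℕ → Fin d → ℝ) {L T : ℕ} (g : Fin (T - L + 1) → ℝ)
    (q : Fin L × Fin d) :
    (hankel z L T *ᵥ g) q = (∑ j, g j • fun k => z (j + k)) q.1 q.2 := by
  simp [hankel, mulVec, dotProduct, mul_comm]

theorem eq_zero_of_rank_hankel {m K T : ℕ} {u : ℕ → Fin m → ℝ} (hpe : (hankel u K T).rank = m * K)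
    (w : ℕ → Fin m → ℝ) (hw : ∀ j ≤ T - K, ∑ s ∈ range K, w s ⬝ᵥ u (j + s) = 0) :
    ∀ s < K, w s = 0 := by
  have hinj := (hankel u K T).vecMul_injective_of_rank_eq_card (by simp [hpe, mul_comm])
  have hw0 : (fun q : Fin K × Fin m => w q.1 q.2) = 0 :=
    hinj <| by
      ext j
      dsimp only
      rw [vecMul_hankel_apply, hw j (by omega), zero_vecMul, Pi.zero_apply]
  exact fun s hs => funext fun q => congrFun hw0 (⟨s, hs⟩, q)

def stateMatrix {n : ℕ} (x : ℕ → Fin n → ℝ) (N : ℕ) : Matrix (Fin n) (Fin N) ℝ :=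
  Matrix.of fun i j => x j i

theorem stateMatrix_mulVec {n : ℕ} (x : ℕ → Fin n → ℝ) (N : ℕ) (g : Fin N → ℝ) :
    stateMatrix x N *ᵥ g = ∑ j, g j • x j := by
  ext i
  simp [stateMatrix, mulVec, dotProduct, mul_comm]

section Dynamics

variable {n m : ℕ} {A : Matrix (Fin n) (Fin n) ℝ} {B : Matrix (Fin n) (Fin m) ℝ}
  {u : ℕ → Fin m → ℝ} {x : ℕ → Fin n → ℝ} {T : ℕ}

theorem state_add_eq (hx : ∀ k, k + 1 < T → x (k + 1) = A *ᵥ x k + B *ᵥ u k) {j i : ℕ}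
    (hji : j + i < T) :
    x (j + i) = (A ^ i) *ᵥ x j + ∑ s ∈ range i, (A ^ (i - 1 - s) * B) *ᵥ u (j + s) := by
  induction i with
  | zero => simp
  | succ i ih =>
    rw [← add_assoc, hx _ (by omega), ih (by omega), mulVec_add, mulVec_mulVec, ← pow_succ',
      mulVec_sum, sum_range_succ, Nat.add_sub_cancel, Nat.sub_self, pow_zero, Matrix.one_mul,
      add_assoc]
    congr 2
    refine sum_congr rfl fun s hs => ?_
    rw [mem_range] at hs
    rw [mulVec_mulVec, ← Matrix.mul_assoc, ← pow_succ', show i - 1 - s + 1 = i - s by omega]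

theorem shiftWeight_annihilates (hx : ∀ k, k + 1 < T → x (k + 1) = A *ᵥ x k + B *ᵥ u k)
    {L : ℕ} (hL : 0 < L) (ζ : Fin n → ℝ) {η : ℕ → Fin m → ℝ} (hη : ∀ l, L ≤ l → η l = 0)
    (h : ∀ j, j + L ≤ T → ζ ⬝ᵥ x j + ∑ l ∈ range L, η l ⬝ᵥ u (j + l) = 0)
    {i j K : ℕ} (hij : j + i + L ≤ T) (hK : i + L ≤ K) :
    (ζ ᵥ* A ^ i) ⬝ᵥ x j +
      ∑ s ∈ range K, shiftWeight (fun k => ζ ᵥ* (A ^ k * B)) η i s ⬝ᵥ u (j + s) = 0 := by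
  obtain ⟨K, rfl⟩ := Nat.exists_eq_add_of_le hK
  have hpad : ∑ t ∈ range K, shiftWeight (fun k => ζ ᵥ* (A ^ k * B)) η i (i + L + t) ⬝ᵥ
      u (j + (i + L + t)) = 0 :=
    sum_eq_zero fun t _ => by rw [shiftWeight, if_neg (by omega), hη _ (by omega), zero_dotProduct]
  rw [sum_range_add, hpad, add_zero, sum_range_add]
  have hj := h (j + i) hij
  rw [state_add_eq hx (by omega)] at hj
  simp only [dotProduct_add, dotProduct_sum, dotProduct_mulVec, add_assoc] at hj
  convert hj using 3
  · exact sum_congr rfl fun s hs => by rw [shiftWeight, if_pos (mem_range.mp hs)]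
  · simp [shiftWeight]

theorem eq_zero_of_annihilates_state_input (hctrb : (ctrbMatrix A B).rank = n)
    (hx : ∀ k, k + 1 < T → x (k + 1) = A *ᵥ x k + B *ᵥ u k) {L : ℕ} (hL : 0 < L)
    (hLT : L + n ≤ T) (hpe : (hankel u (L + n) T).rank = m * (L + n))
    (ζ : Fin n → ℝ) (η : ℕ → Fin m → ℝ) (hη : ∀ l, L ≤ l → η l = 0)
    (h : ∀ j, j + L ≤ T → ζ ⬝ᵥ x j + ∑ l ∈ range L, η l ⬝ᵥ u (j + l) = 0) :
    ζ = 0 ∧ η = 0 := by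
  set c := A.charpoly.coeff
  have hc : c n = 1 := by
    simpa using A.charpoly_monic.coeff_natDegree
  set w := fun s => ∑ i ∈ range (n + 1), c i • shiftWeight (fun k => ζ ᵥ* (A ^ k * B)) η i s
  have hw : ∀ j ≤ T - (L + n), ∑ s ∈ range (L + n), w s ⬝ᵥ u (j + s) = 0 := by
    intro j hj
    have hshift i (hi : i ∈ range (n + 1)) :=
      shiftWeight_annihilates hx hL ζ hη h (i := i) (j := j) (K := L + n) (by simp at hi; omega)
        (by simp at hi; omega)
    have hCH : ∑ i ∈ range (n + 1), c i * ((ζ ᵥ* A ^ i) ⬝ᵥ x j) = 0 := by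
      simpa [vecMul_sum, vecMul_smul, sum_dotProduct] using
        congrArg (fun M => (ζ ᵥ* M) ⬝ᵥ x j) A.sum_charpoly_coeff_smul_pow
    simp only [w, sum_dotProduct, smul_dotProduct, smul_eq_mul]
    rw [sum_comm, ← neg_eq_zero, ← sum_neg_distrib, ← hCH]
    refine sum_congr rfl fun i hi => ?_
    rw [← mul_sum, eq_neg_of_add_eq_zero_right (hshift i hi), mul_neg, neg_neg]
  obtain ⟨hη0, hp⟩ := eq_zero_of_sum_smul_shiftWeight_eq_zero hc hη fun s hs =>
    eq_zero_of_rank_hankel hpe w hw s (by omega)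
  refine ⟨(ctrbMatrix A B).vecMul_injective_of_rank_eq_card (by simpa using hctrb) ?_, hη0⟩
  ext ⟨k, q⟩
  simpa [vecMul, dotProduct, ctrbMatrix] using congrFun (hp k k.isLt) q

theorem fromRows_hankel_stateMatrix_mulVec_surjective (hctrb : (ctrbMatrix A B).rank = n)
    (hx : ∀ k, k + 1 < T → x (k + 1) = A *ᵥ x k + B *ᵥ u k) {L : ℕ} (hL : 0 < L)
    (hLT : L + n ≤ T) (hpe : (hankel u (L + n) T).rank = m * (L + n)) :
    Function.Surjective (fromRows (hankel u L T) (stateMatrix x (T - L + 1))).mulVec := by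
  refine mulVec_surjective_of_vecMul_eq_zero _ fun v hv => ?_
  set η : ℕ → Fin m → ℝ := fun l q => if hl : l < L then v (Sum.inl (⟨l, hl⟩, q)) else 0
  have hvη : v ∘ Sum.inl = fun q => η q.1 q.2 := funext fun q => by simp [η]
  obtain ⟨hζ, hη⟩ := eq_zero_of_annihilates_state_input hctrb hx hL hLT hpe (v ∘ Sum.inr) η
    (fun l hl => funext fun q => by simp [η, not_lt.mpr hl]) fun j hj => by
      have hj := congrFun hv ⟨j, by omega⟩
      rwa [vecMul_fromRows, Pi.add_apply, hvη, vecMul_hankel_apply, add_comm] at hj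
  ext (q | i)
  · simpa [hη] using congrFun hvη q
  · exact congrFun hζ i

end Dynamics

section StateTrajectory

variable {n m p : ℕ} {A : Matrix (Fin n) (Fin n) ℝ} {B : Matrix (Fin n) (Fin m) ℝ}
  {C : Matrix (Fin p) (Fin n) ℝ} {D : Matrix (Fin p) (Fin m) ℝ}

def IsStateTrajectory (A : Matrix (Fin n) (Fin n) ℝ) (B : Matrix (Fin n) (Fin m) ℝ)
    (C : Matrix (Fin p) (Fin n) ℝ) (D : Matrix (Fin p) (Fin m) ℝ) (u : ℕ → Fin m → ℝ)
    (y : ℕ → Fin p → ℝ) (x : ℕ → Fin n → ℝ) (K : ℕ) : Prop :=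
  (∀ k, k + 1 < K → x (k + 1) = A *ᵥ x k + B *ᵥ u k) ∧
    ∀ k, k < K → y k = C *ᵥ x k + D *ᵥ u k

namespace IsStateTrajectory

variable {u u' : ℕ → Fin m → ℝ} {y y' : ℕ → Fin p → ℝ} {x x' : ℕ → Fin n → ℝ} {K : ℕ}

theorem shift (h : IsStateTrajectory A B C D u y x K) {j K' : ℕ} (hj : j + K' ≤ K) :
    IsStateTrajectory A B C D (fun k => u (j + k)) (fun k => y (j + k)) (fun k => x (j + k)) K' :=
  ⟨fun k hk => h.1 (j + k) (by omega), fun k hk => h.2 (j + k) (by omega)⟩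

theorem sum {ι : Type*} (s : Finset ι) (g : ι → ℝ) {u : ι → ℕ → Fin m → ℝ}
    {y : ι → ℕ → Fin p → ℝ} {x : ι → ℕ → Fin n → ℝ}
    (h : ∀ i ∈ s, IsStateTrajectory A B C D (u i) (y i) (x i) K) :
    IsStateTrajectory A B C D (∑ i ∈ s, g i • u i) (∑ i ∈ s, g i • y i) (∑ i ∈ s, g i • x i)
      K := by
  refine ⟨fun k hk => ?_, fun k hk => ?_⟩
  · simp only [Finset.sum_apply, Pi.smul_apply, mulVec_sum, mulVec_smul, ← sum_add_distrib,
      ← smul_add]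
    exact sum_congr rfl fun i hi => by rw [(h i hi).1 k hk]
  · simp only [Finset.sum_apply, Pi.smul_apply, mulVec_sum, mulVec_smul, ← sum_add_distrib,
      ← smul_add]
    exact sum_congr rfl fun i hi => by rw [(h i hi).2 k hk]

theorem output_eq (h : IsStateTrajectory A B C D u y x K)
    (h' : IsStateTrajectory A B C D u' y' x' K) (hu : ∀ k < K, u k = u' k) (hx : x 0 = x' 0) :
    ∀ k < K, y k = y' k := by
  have hstate : ∀ k < K, x k = x' k := by
    intro k hk
    induction k with
    | zero => exact hx
    | succ k ih => rw [h.1 k hk, h'.1 k hk, ih (by omega), hu k (by omega)]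
  intro k hk
  rw [h.2 k hk, h'.2 k hk, hstate k hk, hu k hk]

end IsStateTrajectory

theorem hankel_mulVec_eq_of_isStateTrajectory {u ubar : ℕ → Fin m → ℝ} {y ybar : ℕ → Fin p → ℝ}
    {x xbar : ℕ → Fin n → ℝ} {T L : ℕ} (hLT : L ≤ T) (h : IsStateTrajectory A B C D u y x T)
    (hbar : IsStateTrajectory A B C D ubar ybar xbar L) (g : Fin (T - L + 1) → ℝ)
    (hu : hankel u L T *ᵥ g = fun q => ubar q.1 q.2)
    (hx : stateMatrix x (T - L + 1) *ᵥ g = xbar 0) :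
    hankel y L T *ᵥ g = fun q => ybar q.1 q.2 := by
  have hcomb := IsStateTrajectory.sum univ g fun j _ => h.shift (j := j) (K' := L) (by omega)
  have hy := hcomb.output_eq hbar (fun k hk => funext fun r => by
      rw [← hankel_mulVec_apply u g (⟨k, hk⟩, r), hu]) (by
      rw [← hx, stateMatrix_mulVec]
      simp)
  ext q
  rw [hankel_mulVec_apply, hy q.1 q.1.isLt]

end StateTrajectory

/-- Willems' Fundamental Lemma: for a controllable LTI system, if the data input is
persistently exciting of order `L + n`, then every `L`-long input–output trajectory
of the system is a linear combination of the columns of the data Hankel matrices. -/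
theorem willems_fundamental_lemma {n m p : ℕ}
    (A : Matrix (Fin n) (Fin n) ℝ) (B : Matrix (Fin n) (Fin m) ℝ)
    (C : Matrix (Fin p) (Fin n) ℝ) (D : Matrix (Fin p) (Fin m) ℝ)
    (hctrb : (ctrbMatrix A B).rank = n)
    (ud : ℕ → Fin m → ℝ) (yd : ℕ → Fin p → ℝ) (T L : ℕ) (hLT : L + n ≤ T)
    (hdata : IsTrajectory A B C D ud yd T)
    (hpe : (hankel ud (L + n) T).rank = m * (L + n))
    (ubar : ℕ → Fin m → ℝ) (ybar : ℕ → Fin p → ℝ)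
    (htraj : IsTrajectory A B C D ubar ybar L) :
    ∃ g : Fin (T - L + 1) → ℝ,
      (hankel ud L T).mulVec g = (fun q : Fin L × Fin m => ubar (q.1 : ℕ) q.2) ∧
      (hankel yd L T).mulVec g = (fun q : Fin L × Fin p => ybar (q.1 : ℕ) q.2) := by
  rcases Nat.eq_zero_or_pos L with rfl | hL
  · exact ⟨0, funext fun q => q.1.elim0, funext fun q => q.1.elim0⟩
  obtain ⟨x, hx : IsStateTrajectory A B C D ud yd x T⟩ := hdata
  obtain ⟨xbar, hxbar : IsStateTrajectory A B C D ubar ybar xbar L⟩ := htraj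
  obtain ⟨g, hg⟩ := fromRows_hankel_stateMatrix_mulVec_surjective hctrb hx.1 hL hLT hpe
    (Sum.elim (fun q => ubar q.1 q.2) (xbar 0))
  rw [fromRows_mulVec, Sum.elim_eq_iff] at hg
  exact ⟨g, hg.1, hankel_mulVec_eq_of_isStateTrajectory (by omega) hx hxbar g hg.1 hg.2⟩
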